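/- arXiv:2112.03743 — 3 statements merged into one kernel-verified Lean document; each statement's English description precedes it below -/
import Mathlib

section
/- Let w : ℂ → ℂ be a solution of the Airy equation w'' = z·w that is real on the real axis (i.e., w(x̄) = conj(w(x)) for all x). Suppose α = r·e^{iφ} with r > 0, 0 < φ < π, and w(α) = 0 and w(ᾱ) = 0. Then w(0)·w'(0)·sin φ = −r²·sin(3φ)·∫₀¹ t·|w(αt)|² dt. -/
/-!
Along the rays `t ↦ α t` and `t ↦ ᾱ t`, the Airy equation gives Lommel's identity
`d/dt [α w'(αt) w(ᾱt) − ᾱ w'(ᾱt) w(αt)] = (α³ − ᾱ³) t w(αt) w(ᾱt)`.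
Integrating over `[0, 1]`, the bracket vanishes at `t = 1` because `α` and `ᾱ` are zeros, and equals
`(α − ᾱ) w'(0) w(0)` at `t = 0`. Since `w` is real on the real axis, `w(ᾱt) = conj (w(αt))`, so the
integrand is `t |w(αt)|²`; finally `α − ᾱ = 2i r sin φ` and `α³ − ᾱ³ = 2i r³ sin 3φ`.
-/

open Complex Real ComplexConjugate

theorem HasDerivAt.comp_ofReal_const_mul {w : ℂ → ℂ} {w' a : ℂ} {t : ℝ}
    (h : HasDerivAt w w' (a * t)) : HasDerivAt (fun s : ℝ => w (a * s)) (a * w') t := by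
  simpa [mul_comm] using (h.comp (t : ℂ) ((hasDerivAt_id _).const_mul a)).comp_ofReal

noncomputable def lommelBracket (w : ℂ → ℂ) (a b : ℂ) (t : ℝ) : ℂ :=
  a * deriv w (a * t) * w (b * t) - b * deriv w (b * t) * w (a * t)

section Airy

variable {w : ℂ → ℂ} (hw : Differentiable ℂ w) (hw' : Differentiable ℂ (deriv w))
  (hairy : ∀ z : ℂ, deriv (deriv w) z = z * w z)
include hw hw' hairy

theorem hasDerivAt_lommelBracket (a b : ℂ) (t : ℝ) :
    HasDerivAt (lommelBracket w a b) ((a ^ 3 - b ^ 3) * (t * (w (a * t) * w (b * t)))) t := by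
  have hd : ∀ c : ℂ, HasDerivAt (fun s : ℝ => w (c * s)) (c * deriv w (c * t)) t :=
    fun c => (hw (c * t)).hasDerivAt.comp_ofReal_const_mul
  have hd' : ∀ c : ℂ, HasDerivAt (fun s : ℝ => deriv w (c * s)) (c * (c * t * w (c * t))) t :=
    fun c => hairy (c * t) ▸ (hw' (c * t)).hasDerivAt.comp_ofReal_const_mul
  exact ((((hd' a).const_mul a).mul (hd b)).sub (((hd' b).const_mul b).mul (hd a))).congr_deriv
    (by ring)

theorem lommel_integral (a b : ℂ) :
    (a ^ 3 - b ^ 3) * ∫ t in (0 : ℝ)..1, (t : ℂ) * (w (a * t) * w (b * t))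
      = a * deriv w a * w b - b * deriv w b * w a - (a - b) * deriv w 0 * w 0 := by
  have hcont : Continuous fun t : ℝ => (a ^ 3 - b ^ 3) * (t * (w (a * t) * w (b * t))) := by
    have := hw.continuous
    fun_prop
  rw [← intervalIntegral.integral_const_mul, intervalIntegral.integral_eq_sub_of_hasDerivAt
    (fun t _ => hasDerivAt_lommelBracket hw hw' hairy a b t) (hcont.intervalIntegrable 0 1)]
  simp only [lommelBracket, ofReal_one, ofReal_zero, mul_one, mul_zero]
  ring

end Airy

theorem mul_apply_conj_mul_ofReal {w : ℂ → ℂ} (hreal : ∀ x : ℂ, w (conj x) = conj (w x))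
    (a : ℂ) (t : ℝ) : w (a * t) * w (conj a * t) = ((‖w (a * t)‖ ^ 2 : ℝ) : ℂ) := by
  have : conj a * t = conj (a * t) := by rw [map_mul, conj_ofReal]
  rw [this, hreal, mul_conj']
  push_cast
  rfl

theorem pow_sub_conj_pow_polar (r φ : ℝ) (n : ℕ) :
    (r * exp (φ * I)) ^ n - conj (r * exp (φ * I)) ^ n
      = (2 * (r ^ n * Real.sin (n * φ)) : ℝ) * I := by
  rw [← map_pow, sub_conj, mul_pow, ← Complex.exp_nat_mul, ← ofReal_pow,
    show (n : ℂ) * (φ * I) = ((n * φ : ℝ) : ℂ) * I by push_cast; ring,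
    im_ofReal_mul, exp_ofReal_mul_I_im]

theorem lommel_integral_zeros_general (w : ℂ → ℂ)
    (hw : Differentiable ℂ w) (hw' : Differentiable ℂ (deriv w))
    (hairy : ∀ z : ℂ, deriv (deriv w) z = z * w z)
    (hreal : ∀ x : ℂ, w (starRingEnd ℂ x) = starRingEnd ℂ (w x))
    (r φ : ℝ) (hr : 0 < r)
    (α : ℂ) (hα : α = r * Complex.exp (φ * Complex.I))
    (hz : w α = 0) (hz' : w (starRingEnd ℂ α) = 0) :
    w 0 * deriv w 0 * (Real.sin φ : ℂ)
      = -((r ^ 2 * Real.sin (3 * φ) * ∫ t in (0:ℝ)..1, t * ‖w (α * t)‖ ^ 2 : ℝ) : ℂ) := by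
  have hdiff1 := pow_sub_conj_pow_polar r φ 1
  have hdiff3 := pow_sub_conj_pow_polar r φ 3
  rw [← hα] at hdiff1 hdiff3
  simp only [pow_one, Nat.cast_one, one_mul] at hdiff1
  have hlommel := lommel_integral hw hw' hairy α (conj α)
  simp_rw [mul_apply_conj_mul_ofReal hreal, ← ofReal_mul, intervalIntegral.integral_ofReal,
    hdiff1, hdiff3, hz, hz'] at hlommel
  have h2rI : (2 * r * I : ℂ) ≠ 0 := by simp [hr.ne']
  refine mul_left_cancel₀ h2rI ?_
  push_cast at hlommel ⊢
  linear_combination hlommel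

theorem lommel_integral_zeros (w : ℂ → ℂ)
    (hw : Differentiable ℂ w) (hw' : Differentiable ℂ (deriv w))
    (hairy : ∀ z : ℂ, deriv (deriv w) z = z * w z)
    (hreal : ∀ x : ℂ, w (starRingEnd ℂ x) = starRingEnd ℂ (w x))
    (r φ : ℝ) (hr : 0 < r) (hφ : 0 < φ ∧ φ < Real.pi)
    (α : ℂ) (hα : α = r * Complex.exp (φ * Complex.I))
    (hz : w α = 0) (hz' : w (starRingEnd ℂ α) = 0) :
    w 0 * deriv w 0 * (Real.sin φ : ℂ)
      = -((r ^ 2 * Real.sin (3 * φ) * ∫ t in (0:ℝ)..1, t * ‖w (α * t)‖ ^ 2 : ℝ) : ℂ) :=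
  lommel_integral_zeros_general w hw hw' hairy hreal r φ hr α hα hz hz'
end

section
/- Let w be a nontrivial solution of the Airy equation w'' = z·w, real on the real axis, with w(0)·w'(0) > 0 (respectively < 0). If α = r·e^{iφ} with r > 0, 0 < φ < π, φ ≠ π/2, is a non-real zero of w (so also w(ᾱ) = 0), then sin(3φ) < 0 (respectively sin(3φ) > 0). -/
open Complex Real

lemma comp_hasDerivAt' (g : ℂ → ℂ) (hg : Differentiable ℂ g) (c : ℂ) (t : ℝ) :
    HasDerivAt (fun s : ℝ => g (c * s)) (c * deriv g (c * t)) t := by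
  have h1 : HasDerivAt (fun s : ℝ => (c * (s:ℂ))) c t := by
    simpa using (Complex.ofRealCLM.hasDerivAt (x := t)).const_mul c
  have h3 := ((hg (c * t)).hasDerivAt).scomp t h1
  exact h3

lemma real_at_zero (w : ℂ → ℂ) (hw : Differentiable ℂ w)
    (hreal : ∀ x : ℂ, w (starRingEnd ℂ x) = starRingEnd ℂ (w x)) :
    (w 0).im = 0 ∧ (deriv w 0).im = 0 := by
  have h0 : (w 0).im = 0 := by
    have := hreal 0
    simp only [map_zero] at this
    have := congrArg Complex.im this
    simp at this
    linarith [this]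
  refine ⟨h0, ?_⟩
  -- w is real on the real axis
  have hre : ∀ t : ℝ, (w t).im = 0 := by
    intro t
    have := hreal t
    rw [Complex.conj_ofReal] at this
    have := congrArg Complex.im this
    simp at this
    linarith [this]
  have hf : HasDerivAt (fun t : ℝ => w ((1:ℂ) * t)) ((1:ℂ) * deriv w ((1:ℂ) * 0)) 0 :=
    comp_hasDerivAt' w hw 1 0
  simp only [one_mul, mul_zero] at hf
  have him : HasDerivAt (fun t : ℝ => (w t).im) (deriv w 0).im 0 := by
    exact (Complex.imCLM.hasFDerivAt.comp_hasDerivAt 0 hf)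
  have hconst : (fun t : ℝ => (w t).im) = fun _ => 0 := funext hre
  rw [hconst] at him
  have := him.deriv
  simp at this
  exact this.symm

theorem nonreal_zero_angle_sign (w : ℂ → ℂ)
    (hw : Differentiable ℂ w) (hw' : Differentiable ℂ (deriv w))
    (hairy : ∀ z : ℂ, deriv (deriv w) z = z * w z)
    (hreal : ∀ x : ℂ, w (starRingEnd ℂ x) = starRingEnd ℂ (w x))
    (hnontriv : w ≠ 0)
    (r φ : ℝ) (hr : 0 < r) (hφ₁ : 0 < φ) (hφ₂ : φ < Real.pi) (hφ₃ : φ ≠ Real.pi / 2)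
    (α : ℂ) (hα : α = r * Complex.exp (φ * Complex.I))
    (hz : w α = 0) (hz' : w (starRingEnd ℂ α) = 0) :
    ((w 0 * deriv w 0).re > 0 → Real.sin (3 * φ) < 0) ∧
    ((w 0 * deriv w 0).re < 0 → Real.sin (3 * φ) > 0) := by
  set B := starRingEnd ℂ α with hB
  -- Wronskian
  set W : ℝ → ℂ := fun t => α * deriv w (α * t) * w (B * t)
      - w (α * t) * (B * deriv w (B * t)) with hWdef
  have hW : ∀ t ∈ Set.uIcc (0:ℝ) 1, HasDerivAt W
      ((α ^ 3 - B ^ 3) * t * (w (α * t) * w (B * t))) t := by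
    intro t _
    have d1 : HasDerivAt (fun t : ℝ => α * deriv w (α * t))
        (α * (α * deriv (deriv w) (α * t))) t :=
      (comp_hasDerivAt' (deriv w) hw' α t).const_mul α
    have d2 : HasDerivAt (fun t : ℝ => w (B * t)) (B * deriv w (B * t)) t :=
      comp_hasDerivAt' w hw B t
    have d3 : HasDerivAt (fun t : ℝ => w (α * t)) (α * deriv w (α * t)) t :=
      comp_hasDerivAt' w hw α t
    have d4 : HasDerivAt (fun t : ℝ => B * deriv w (B * t))
        (B * (B * deriv (deriv w) (B * t))) t :=
      (comp_hasDerivAt' (deriv w) hw' B t).const_mul B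
    have := (d1.mul d2).sub (d3.mul d4)
    rw [hairy, hairy] at this
    convert this using 1
    · rfl
    · rfl
    ring
  have hcont : ContinuousOn
      (fun t : ℝ => (α ^ 3 - B ^ 3) * t * (w (α * t) * w (B * t)))
      (Set.uIcc (0:ℝ) 1) := by
    apply Continuous.continuousOn
    have hwc : Continuous w := hw.continuous
    fun_prop
  have hftc := intervalIntegral.integral_eq_sub_of_hasDerivAt hW
    (hcont.intervalIntegrable)
  -- evaluate boundary
  have hW1 : W 1 = 0 := by
    simp [hWdef, hz, hz']
  have hW0 : W 0 = (α - B) * (w 0 * deriv w 0) := by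
    simp [hWdef]
    ring
  rw [hW1, hW0] at hftc
  -- conjugation symmetry along the ray
  have hv : ∀ t : ℝ, w (B * t) = starRingEnd ℂ (w (α * t)) := by
    intro t
    rw [← hreal]
    congr 1
    simp [hB, Complex.conj_ofReal]
  -- rewrite integral as real
  set I : ℝ := ∫ t in (0:ℝ)..1, t * Complex.normSq (w (α * t)) with hIdef
  have hint : (∫ t in (0:ℝ)..1, (α ^ 3 - B ^ 3) * t * (w (α * t) * w (B * t)))
      = (α ^ 3 - B ^ 3) * (I : ℂ) := by
    have : ∀ t : ℝ, (α ^ 3 - B ^ 3) * t * (w (α * t) * w (B * t))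
        = (α ^ 3 - B ^ 3) * ((t * Complex.normSq (w (α * t)) : ℝ) : ℂ) := by
      intro t
      rw [hv t, Complex.mul_conj]
      push_cast
      ring
    rw [intervalIntegral.integral_congr (fun t _ => this t),
      intervalIntegral.integral_const_mul]
    congr 1
    exact intervalIntegral.integral_ofReal
  rw [hint] at hftc
  -- nonnegativity of I
  have hI : 0 ≤ I := by
    apply intervalIntegral.integral_nonneg (by norm_num)
    intro t ht
    exact mul_nonneg ht.1 (Complex.normSq_nonneg _)
  -- reality of w 0 * deriv w 0
  obtain ⟨h1, h2⟩ := real_at_zero w hw hreal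
  set c : ℝ := (w 0 * deriv w 0).re with hc
  have hcc : w 0 * deriv w 0 = (c : ℂ) := by
    have : (w 0 * deriv w 0).im = 0 := by
      simp [Complex.mul_im, h1, h2]
    exact Complex.ext (by simp [hc]) (by simp [this])
  rw [hcc] at hftc
  -- compute imaginary parts
  have hαim : α.im = r * Real.sin φ := by
    rw [hα, Complex.exp_mul_I]
    simp [Complex.mul_im, Complex.add_im, Complex.cos_ofReal_im, Complex.sin_ofReal_re]
  have hα3im : (α ^ 3).im = r ^ 3 * Real.sin (3 * φ) := by
    have he : Complex.exp (((3:ℕ):ℂ) * (↑φ * Complex.I))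
        = Complex.exp ((↑(3 * φ) : ℂ) * Complex.I) := by
      congr 1; push_cast; ring
    rw [hα, mul_pow, ← Complex.exp_nat_mul, he, Complex.exp_mul_I, ← Complex.ofReal_pow]
    simp only [Complex.mul_im, Complex.add_im, Complex.add_re, Complex.ofReal_re,
      Complex.ofReal_im, Complex.cos_ofReal_re, Complex.cos_ofReal_im,
      Complex.sin_ofReal_re, Complex.sin_ofReal_im, Complex.mul_re,
      Complex.I_re, Complex.I_im, mul_zero, zero_mul, mul_one, add_zero,
      zero_add, sub_zero]
  -- B = conj α, so B^3 = conj (α^3)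
  have hB3 : B ^ 3 = starRingEnd ℂ (α ^ 3) := by rw [hB, map_pow]
  -- take im of hftc
  have key := congrArg Complex.im hftc
  rw [hB3, hB] at key
  simp only [Complex.sub_im, Complex.mul_im, Complex.sub_re, Complex.mul_re,
    Complex.conj_im, Complex.conj_re, Complex.ofReal_re, Complex.ofReal_im,
    Complex.zero_im, Complex.zero_re, Complex.neg_im, Complex.neg_re,
    zero_sub, mul_zero, zero_mul, add_zero, zero_add, sub_zero, sub_neg_eq_add] at key
  have hsin : 0 < Real.sin φ := Real.sin_pos_of_pos_of_lt_pi hφ₁ hφ₂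
  have keyr : (α ^ 3).im * I = - (α.im * c) := by linear_combination key / 2
  rw [hα3im, hαim] at keyr
  constructor
  · intro hpos
    by_contra h
    push_neg at h
    have f1 : 0 ≤ r ^ 3 * Real.sin (3 * φ) * I :=
      mul_nonneg (mul_nonneg (by positivity) h) hI
    have f2 : 0 < r * Real.sin φ * c := mul_pos (mul_pos hr hsin) hpos
    linarith
  · intro hneg
    by_contra h
    push_neg at h
    have f1 : 0 ≤ r ^ 3 * (-Real.sin (3 * φ)) * I :=
      mul_nonneg (mul_nonneg (by positivity) (neg_nonneg.mpr h)) hI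
    have f2 : 0 < r * Real.sin φ * (-c) := mul_pos (mul_pos hr hsin) (by linarith)
    nlinarith
end

section
/- Let w be a nontrivial solution of the Airy equation w'' = z·w, real on the real axis, with w(0)·w'(0) = 0 but w not identically zero, and let α = r·e^{iφ}, r > 0, 0 < φ < π, be a non-real zero of w with w(ᾱ) = 0. Then φ = π/3 or φ = 2π/3. -/
/-!
For `β = conj α`, the function `t ↦ α w'(αt) w(βt) - β w(αt) w'(βt)` has derivative
`(α³ - β³) t w(αt) w(βt) = (α³ - β³) t |w(αt)|²` by the Airy equation and the reality
of `w`. Integrating over `[0, 1]`, the boundary terms vanish because `w(α) = w(β) = 0` and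
`w(0) w'(0) = 0`, while `∫₀¹ t |w(αt)|² dt > 0` because the entire function `w ≢ 0` cannot
vanish on the segment `(0, α)`. Hence `α³` is real, i.e. `sin 3φ = 0`.
-/

open Complex Real Topology MeasureTheory

theorem intervalIntegral_pos_of_nonneg_of_ne_zero {f : ℝ → ℝ} {a b x₀ : ℝ}
    (hf : Continuous f) (hnn : ∀ x ∈ Set.Ioc a b, 0 ≤ f x) (hx₀ : x₀ ∈ Set.Ioo a b)
    (hne : f x₀ ≠ 0) :
    0 < ∫ x in a..b, f x := by
  have hab : a < b := hx₀.1.trans hx₀.2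
  have hnn_ae : 0 ≤ᵐ[volume.restrict (Set.uIoc a b)] f := by
    rw [Set.uIoc_of_le hab.le]
    exact ae_restrict_of_forall_mem measurableSet_Ioc hnn
  rw [intervalIntegral.integral_pos_iff_support_of_nonneg_ae' hnn_ae (hf.intervalIntegrable a b)]
  have hopen : IsOpen (Function.support f ∩ Set.Ioo a b) := hf.isOpen_support.inter isOpen_Ioo
  refine ⟨hab, (hopen.measure_pos volume ⟨x₀, hne, hx₀⟩).trans_le ?_⟩
  exact measure_mono (Set.inter_subset_inter_right _ Set.Ioo_subset_Ioc_self)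

theorem im_pow_ofReal_mul_exp (r φ : ℝ) (n : ℕ) :
    ((r * exp (φ * I)) ^ n).im = r ^ n * Real.sin (n * φ) := by
  rw [mul_pow, ← Complex.exp_nat_mul, ← ofReal_pow,
    show (n : ℂ) * (φ * I) = ((n * φ : ℝ) : ℂ) * I by push_cast; ring, im_ofReal_mul,
    exp_ofReal_mul_I_im]

theorem eq_pi_div_three_or_of_sin_three_mul_eq_zero {φ : ℝ} (h₀ : 0 < φ) (hπ : φ < π)
    (h : Real.sin (3 * φ) = 0) : φ = π / 3 ∨ φ = 2 * π / 3 := by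
  obtain ⟨n, hn⟩ := Real.sin_eq_zero_iff.1 h
  have hpos : (0 : ℝ) < n := by nlinarith [Real.pi_pos]
  have hlt : (n : ℝ) < 3 := by nlinarith [Real.pi_pos]
  have : 0 < n := by exact_mod_cast hpos
  have : n < 3 := by exact_mod_cast hlt
  interval_cases n
  · left; push_cast at hn; linarith
  · right; push_cast at hn; linarith

theorem hasDerivAt_comp_const_mul_ofReal {w : ℂ → ℂ} {c : ℂ} {t : ℝ}
    (hw : DifferentiableAt ℂ w (c * t)) :
    HasDerivAt (fun s : ℝ => w (c * s)) (c * deriv w (c * t)) t := by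
  have := (hw.hasDerivAt.comp (t : ℂ) ((hasDerivAt_id (t : ℂ)).const_mul c)).comp_ofReal
  simpa [mul_comm] using this

theorem Differentiable.eq_zero_of_forall_mem_Ioo_mul_eq_zero {w : ℂ → ℂ}
    (hw : Differentiable ℂ w) {α : ℂ} (hα : α ≠ 0)
    (h : ∀ t ∈ Set.Ioo (0 : ℝ) 1, w (α * t) = 0) : w = 0 := by
  have hmap :
      Filter.Tendsto (fun t : ℝ => α * t) (𝓝[≠] (1 / 2)) (𝓝[≠] (α * (1 / 2 : ℝ))) := by
    refine tendsto_nhdsWithin_of_tendsto_nhds_of_eventually_within _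
      ((Continuous.tendsto (by fun_prop) _).mono_left nhdsWithin_le_nhds) ?_
    filter_upwards [self_mem_nhdsWithin] with t ht
    exact fun h => ht (Complex.ofReal_injective (mul_left_cancel₀ hα h))
  have hfreq : ∃ᶠ z in 𝓝[≠] (α * (1 / 2 : ℝ)), w z = 0 := by
    refine hmap.frequently (Filter.Eventually.frequently ?_)
    filter_upwards [nhdsWithin_le_nhds (Ioo_mem_nhds (by norm_num : (0 : ℝ) < 1 / 2)
      (by norm_num : (1 / 2 : ℝ) < 1))] using h
  have hana : AnalyticOnNhd ℂ w Set.univ := analyticOnNhd_univ_iff_differentiable.2 hw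
  exact funext fun z => hana.eqOn_zero_of_preconnected_of_frequently_eq_zero
    isPreconnected_univ (Set.mem_univ _) hfreq (Set.mem_univ z)

theorem airy_wronskian_integral {w : ℂ → ℂ}
    (hw : Differentiable ℂ w) (hw' : Differentiable ℂ (deriv w))
    (hairy : ∀ z : ℂ, deriv (deriv w) z = z * w z) (α β : ℂ) :
    (α ^ 3 - β ^ 3) * ∫ t in (0 : ℝ)..1, (t : ℂ) * (w (α * t) * w (β * t)) =
      α * deriv w α * w β - β * w α * deriv w β - (α - β) * (w 0 * deriv w 0) := by
  have hd : ∀ (c : ℂ) (t : ℝ),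
      HasDerivAt (fun s : ℝ => w (c * s)) (c * deriv w (c * t)) t :=
    fun c t => hasDerivAt_comp_const_mul_ofReal (hw _)
  have hd' : ∀ (c : ℂ) (t : ℝ),
      HasDerivAt (fun s : ℝ => deriv w (c * s)) (c * ((c * t) * w (c * t))) t := fun c t => by
    simpa only [hairy] using hasDerivAt_comp_const_mul_ofReal (hw' (c * t))
  have hW : ∀ t : ℝ, HasDerivAt
      (fun s : ℝ => α * (deriv w (α * s) * w (β * s)) - β * (w (α * s) * deriv w (β * s)))
      ((α ^ 3 - β ^ 3) * (t * (w (α * t) * w (β * t)))) t := fun t =>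
    ((((hd' α t).mul (hd β t)).const_mul α).sub
      (((hd α t).mul (hd' β t)).const_mul β)).congr_deriv (by ring)
  have := hw.continuous
  rw [← intervalIntegral.integral_const_mul,
    intervalIntegral.integral_eq_sub_of_hasDerivAt (fun t _ => hW t)
      (Continuous.intervalIntegrable (by fun_prop) _ _)]
  simp only [ofReal_one, ofReal_zero, mul_one, mul_zero]
  ring

theorem nonreal_zero_on_rays (w : ℂ → ℂ)
    (hw : Differentiable ℂ w) (hw' : Differentiable ℂ (deriv w))
    (hairy : ∀ z : ℂ, deriv (deriv w) z = z * w z)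
    (hreal : ∀ x : ℂ, w (starRingEnd ℂ x) = starRingEnd ℂ (w x))
    (hnontriv : w ≠ 0) (h0 : w 0 * deriv w 0 = 0)
    (r φ : ℝ) (hr : 0 < r) (hφ₁ : 0 < φ) (hφ₂ : φ < Real.pi)
    (α : ℂ) (hα : α = r * Complex.exp (φ * Complex.I))
    (hz : w α = 0) (hz' : w (starRingEnd ℂ α) = 0) :
    φ = Real.pi / 3 ∨ φ = 2 * Real.pi / 3 := by
  have hα₀ : α ≠ 0 := hα ▸ mul_ne_zero (ofReal_ne_zero.2 hr.ne') (Complex.exp_ne_zero _)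
  obtain ⟨t₀, ht₀, hwt₀⟩ : ∃ t ∈ Set.Ioo (0 : ℝ) 1, w (α * t) ≠ 0 := by
    by_contra! h
    exact hnontriv (hw.eq_zero_of_forall_mem_Ioo_mul_eq_zero hα₀ h)
  have hJ : 0 < ∫ t in (0 : ℝ)..1, t * normSq (w (α * t)) :=
    intervalIntegral_pos_of_nonneg_of_ne_zero (by have := hw.continuous; fun_prop)
      (fun t ht => mul_nonneg ht.1.le (normSq_nonneg _)) ht₀
      (mul_ne_zero ht₀.1.ne' (normSq_pos.2 hwt₀).ne')
  have hconj : ∀ t : ℝ, w (starRingEnd ℂ α * t) = starRingEnd ℂ (w (α * t)) := fun t => by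
    rw [← hreal, map_mul, conj_ofReal]
  have hcube : (α ^ 3 - starRingEnd ℂ α ^ 3) *
      ((∫ t in (0 : ℝ)..1, t * normSq (w (α * t)) : ℝ) : ℂ) = 0 := by
    rw [← intervalIntegral.integral_ofReal]
    simp only [ofReal_mul, ← mul_conj, ← hconj]
    rw [airy_wronskian_integral hw hw' hairy, hz, hz', h0]
    ring
  have him : (α ^ 3).im = 0 := by
    rw [← conj_eq_iff_im, map_pow]
    exact (sub_eq_zero.1 ((mul_eq_zero.1 hcube).resolve_right (ofReal_ne_zero.2 hJ.ne'))).symm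
  rw [hα, im_pow_ofReal_mul_exp] at him
  exact eq_pi_div_three_or_of_sin_three_mul_eq_zero hφ₁ hφ₂
    ((mul_eq_zero.1 him).resolve_left (by positivity))
end
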